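/- arXiv:math/0605749 — 4 statements merged into one kernel-verified Lean document; each statement's English description precedes it below -/
import Mathlib

section
/- As M → 0+, h(a(M)) = ∫_{0}^{∞} dt/√(t(t + a(M))(t^2 + 3a(M)t + 1 + 3a(M)^2)) tends to +∞. -/
/-!
On `a < t ≤ 1` the quartic under the root is at most `(4t)²`, so the integral is at least
`∫_a^1 dt/(4t) = -log a / 4`, which tends to `+∞` as `a → 0⁺`; and `0 < a(M) ≤ M` forces
`a(M) → 0⁺`. The bounds `a^{-1/2} t^{-1/2}` near `0` and `t^{-2}` near `∞` make the integral
converge, which the comparison needs: the Bochner integral of a non-integrable function is `0`.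
-/

open MeasureTheory Set Filter Topology Real

noncomputable def integrand (a t : ℝ) : ℝ :=
  1 / √(t * (t + a) * (t ^ 2 + 3 * a * t + 1 + 3 * a ^ 2))

lemma integrand_nonneg (a t : ℝ) : 0 ≤ integrand a t := by
  unfold integrand; positivity

lemma measurable_integrand (a : ℝ) : Measurable (integrand a) := by
  unfold integrand; fun_prop

lemma integrand_le_inv_sqrt_mul {a t : ℝ} (ha : 0 < a) (ht : 0 < t) :
    integrand a t ≤ (√a)⁻¹ * t ^ (-(1 / 2) : ℝ) := by
  have hle : a * t ≤ t * (t + a) * (t ^ 2 + 3 * a * t + 1 + 3 * a ^ 2) := by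
    have : a * t ≤ t * (t + a) := by nlinarith
    nlinarith [mul_nonneg (mul_nonneg ht.le (by positivity : 0 ≤ t + a))
      (by positivity : 0 ≤ t ^ 2 + 3 * a * t + 3 * a ^ 2)]
  calc integrand a t ≤ 1 / √(a * t) :=
        one_div_le_one_div_of_le (sqrt_pos.2 (by positivity)) (sqrt_le_sqrt hle)
    _ = (√a)⁻¹ * t ^ (-(1 / 2) : ℝ) := by
        rw [sqrt_mul ha.le, rpow_neg ht.le, ← sqrt_eq_rpow, one_div, mul_inv]

lemma integrand_le_rpow_neg_two {a t : ℝ} (ha : 0 ≤ a) (ht : 0 < t) :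
    integrand a t ≤ t ^ (-2 : ℝ) := by
  have hle : (t ^ 2) ^ 2 ≤ t * (t + a) * (t ^ 2 + 3 * a * t + 1 + 3 * a ^ 2) := by
    have h1 : t * t ≤ t * (t + a) := by nlinarith
    have h2 : t ^ 2 ≤ t ^ 2 + 3 * a * t + 1 + 3 * a ^ 2 := by nlinarith [mul_nonneg ha ht.le]
    nlinarith [mul_le_mul h1 h2 (by positivity) (by positivity)]
  calc integrand a t ≤ 1 / √((t ^ 2) ^ 2) :=
        one_div_le_one_div_of_le (sqrt_pos.2 (by positivity)) (sqrt_le_sqrt hle)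
    _ = t ^ (-2 : ℝ) := by
        rw [sqrt_sq (by positivity), rpow_neg ht.le, one_div, rpow_two]

lemma inv_four_mul_le_integrand {a t : ℝ} (ha : 0 ≤ a) (hat : a ≤ t) (ht : 0 < t)
    (ht1 : t ≤ 1) : (4 * t)⁻¹ ≤ integrand a t := by
  have hle : t * (t + a) * (t ^ 2 + 3 * a * t + 1 + 3 * a ^ 2) ≤ (4 * t) ^ 2 := by
    have h1 : t * (t + a) ≤ 2 * t ^ 2 := by nlinarith
    have h2 : t ^ 2 + 3 * a * t + 1 + 3 * a ^ 2 ≤ 8 := by nlinarith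
    nlinarith [mul_le_mul h1 h2 (by positivity) (by positivity)]
  rw [← one_div, integrand]
  calc 1 / (4 * t) = 1 / √((4 * t) ^ 2) := by rw [sqrt_sq (by positivity)]
    _ ≤ _ := one_div_le_one_div_of_le (sqrt_pos.2 (by positivity)) (sqrt_le_sqrt hle)

lemma integrableOn_integrand_Ioi {a : ℝ} (ha : 0 < a) : IntegrableOn (integrand a) (Ioi 0) := by
  have hmeas := (measurable_integrand a).aestronglyMeasurable (μ := volume.restrict (Ioi 0))
  rw [← Ioc_union_Ioi_eq_Ioi zero_le_one]
  refine IntegrableOn.union ?_ ?_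
  · have hg : IntegrableOn (fun t : ℝ => (√a)⁻¹ * t ^ (-(1 / 2) : ℝ)) (Ioc 0 1) :=
      ((intervalIntegrable_iff_integrableOn_Ioc_of_le zero_le_one).1
        (intervalIntegral.intervalIntegrable_rpow' (by norm_num))).const_mul _
    refine hg.mono' (hmeas.mono_measure (Measure.restrict_mono Ioc_subset_Ioi_self le_rfl))
      ((ae_restrict_iff' measurableSet_Ioc).2 (ae_of_all _ fun t ht => ?_))
    rw [norm_of_nonneg (integrand_nonneg a t)]
    exact integrand_le_inv_sqrt_mul ha ht.1
  · refine (integrableOn_Ioi_rpow_of_lt (by norm_num : (-2 : ℝ) < -1) one_pos).mono'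
      (hmeas.mono_measure (Measure.restrict_mono (Ioi_subset_Ioi zero_le_one) le_rfl))
      ((ae_restrict_iff' measurableSet_Ioi).2 (ae_of_all _ fun t ht => ?_))
    rw [norm_of_nonneg (integrand_nonneg a t)]
    exact integrand_le_rpow_neg_two ha.le (zero_lt_one.trans ht)

lemma neg_log_div_four_le_integral {a : ℝ} (ha : 0 < a) (ha1 : a ≤ 1) :
    -log a / 4 ≤ ∫ t in Ioi 0, integrand a t := by
  have hint : ∫ t in Ioc a 1, (4 * t)⁻¹ = -log a / 4 := by
    rw [← intervalIntegral.integral_of_le ha1]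
    simp only [mul_inv, intervalIntegral.integral_const_mul]
    rw [integral_inv_of_pos ha one_pos, one_div, log_inv]
    ring
  have hg : IntegrableOn (fun t : ℝ => (4 * t)⁻¹) (Ioc a 1) :=
    ((continuousOn_const.mul continuousOn_id).inv₀ fun t ht =>
      mul_ne_zero four_ne_zero (ha.trans_le ht.1).ne').integrableOn_Icc.mono_set Ioc_subset_Icc_self
  have hsub : Ioc a 1 ⊆ Ioi 0 := fun t ht => ha.trans ht.1
  calc -log a / 4 = ∫ t in Ioc a 1, (4 * t)⁻¹ := hint.symm
    _ ≤ ∫ t in Ioc a 1, integrand a t :=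
        setIntegral_mono_on hg ((integrableOn_integrand_Ioi ha).mono_set hsub) measurableSet_Ioc
          fun t ht => inv_four_mul_le_integrand ha.le ht.1.le (ha.trans ht.1) ht.2
    _ ≤ ∫ t in Ioi 0, integrand a t :=
        setIntegral_mono_set (integrableOn_integrand_Ioi ha)
          (ae_of_all _ fun t => integrand_nonneg a t) hsub.eventuallyLE

theorem tendsto_integral_integrand_atTop :
    Tendsto (fun a => ∫ t in Ioi 0, integrand a t) (𝓝[>] 0) atTop := by
  refine tendsto_atTop_mono' _ ?_
    ((tendsto_neg_atBot_atTop.comp tendsto_log_nhdsGT_zero).atTop_div_const four_pos)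
  filter_upwards [Ioo_mem_nhdsGT one_pos] with a ha
  exact neg_log_div_four_le_integral ha.1 ha.2.le

/-- As `M → 0⁺`, `h(a(M)) = ∫_0^∞ dt/√(t(t+a(M))(t^2+3a(M)t+1+3a(M)^2))` tends to `+∞`. -/
theorem h_tendsto_atTop (a : ℝ → ℝ)
    (ha : ∀ M : ℝ, 0 < M → 0 < a M ∧ a M + (a M) ^ 3 = M) :
    Filter.Tendsto
      (fun M => ∫ t in Ioi (0 : ℝ),
        1 / Real.sqrt (t * (t + a M) * (t ^ 2 + 3 * a M * t + 1 + 3 * (a M) ^ 2)))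
      (nhdsWithin 0 (Set.Ioi 0)) Filter.atTop := by
  have ha_le : ∀ᶠ M in 𝓝[>] 0, 0 < a M ∧ a M ≤ M :=
    eventually_mem_nhdsWithin.mono fun M hM => by
      obtain ⟨ha0, haM⟩ := ha M hM
      exact ⟨ha0, by nlinarith [pow_pos ha0 3]⟩
  have ha_lim : Tendsto a (𝓝[>] 0) (𝓝[>] 0) := by
    refine tendsto_nhdsWithin_of_tendsto_nhds_of_eventually_within _ ?_
      (ha_le.mono fun M hM => hM.1)
    exact tendsto_of_tendsto_of_tendsto_of_le_of_le' tendsto_const_nhds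
      (tendsto_id.mono_left nhdsWithin_le_nhds) (ha_le.mono fun M hM => hM.1.le)
      (ha_le.mono fun M hM => hM.2)
  exact tendsto_integral_integrand_atTop.comp ha_lim
end

section
/- Comparison principle: let u_1, u_2 : [ρ*, ∞) → ℝ be C^2 radial functions with u_1 ≥ 1, u_2 ≥ 1, both satisfying u'' + 2 coth(ρ) u' + (3/4) u (1 - u^4) = f(ρ) for the same function f on (ρ*, ∞), with u_1(ρ*) ≥ u_2(ρ*) and u_1(ρ) - u_2(ρ) → 0 as ρ → ∞. Then u_1 ≥ u_2 on [ρ*, ∞). -/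
/-!
Suppose `η = u₁ - u₂` is negative somewhere. Since `η(ρ*) ≥ 0` and `η → 0` at infinity, `η`
attains a negative minimum at an interior point `m`. There `η'(m) = 0`, so the friction terms
`2 coth(ρ) u'` cancel and subtracting the two equations leaves
`η''(m) = (3/4) ((u₁^5 - u₁) - (u₂^5 - u₂))(m)`. As `x ↦ x^5 - x` is strictly increasing on
`[1, ∞)` and `1 ≤ u₁(m) < u₂(m)`, this is negative, contradicting `η''(m) ≥ 0` at a minimum.
-/

open Filter Set Topology

theorem deriv_deriv_sub {𝕜 F : Type*} [NontriviallyNormedField 𝕜] [NormedAddCommGroup F]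
    [NormedSpace 𝕜 F] {f g : 𝕜 → F} {x : 𝕜} (hf : ContDiffAt 𝕜 2 f x) (hg : ContDiffAt 𝕜 2 g x) :
    deriv (deriv (f - g)) x = deriv (deriv f) x - deriv (deriv g) x := by
  simpa [iteratedDeriv_eq_iterate] using iteratedDeriv_sub hf hg

theorem IsLocalMin.deriv_deriv_nonneg {f : ℝ → ℝ} {x : ℝ} (hmin : IsLocalMin f x)
    (hc : ContinuousAt f x) : 0 ≤ deriv (deriv f) x := by
  by_contra! hneg
  have hmax : IsLocalMax f x := isLocalMax_of_deriv_deriv_neg hneg hmin.deriv_eq_zero hc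
  have hconst : f =ᶠ[𝓝 x] fun _ => f x :=
    (hmin.and hmax).mono fun y hy => le_antisymm hy.2 hy.1
  have hderiv : deriv f =ᶠ[𝓝 x] fun _ => 0 :=
    hconst.eventuallyEq_nhds.mono fun y hy => hy.deriv_eq.trans (deriv_const y (f x))
  rw [hderiv.deriv_eq, deriv_const] at hneg
  exact lt_irrefl 0 hneg

theorem exists_isLocalMin_le_of_tendsto_zero {η : ℝ → ℝ} {a b : ℝ}
    (hη : ContinuousOn η (Ici a)) (ha : 0 ≤ η a) (hab : a ≤ b) (hb : η b < 0)
    (hlim : Tendsto η atTop (𝓝 0)) : ∃ m, a < m ∧ η m ≤ η b ∧ IsLocalMin η m := by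
  obtain ⟨R₀, hR₀⟩ := eventually_atTop.mp (hlim.eventually_const_lt (by linarith : η b / 2 < 0))
  set R := max R₀ b
  have hbR : b ≤ R := le_max_right _ _
  obtain ⟨m, ⟨ham, hmR⟩, hmin⟩ := isCompact_Icc.exists_isMinOn ⟨b, hab, hbR⟩
    (hη.mono (Icc_subset_Ici_self : Icc a R ⊆ Ici a))
  have hmb : η m ≤ η b := hmin ⟨hab, hbR⟩
  have ham' : a < m := ham.lt_of_ne (by rintro rfl; linarith)
  have hmR' : m < R := hmR.lt_of_ne (by rintro rfl; linarith [hR₀ R (le_max_left _ _)])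
  exact ⟨m, ham', hmb, hmin.isLocalMin (Icc_mem_nhds ham' hmR')⟩

theorem strictMonoOn_pow_five_sub_self : StrictMonoOn (fun x : ℝ => x ^ 5 - x) (Ici 1) := by
  intro x (hx : 1 ≤ x) y (hy : 1 ≤ y) hxy
  have hG : 1 < x ^ 4 + x ^ 3 * y + x ^ 2 * y ^ 2 + x * y ^ 3 + y ^ 4 := by
    have hx0 : 0 ≤ x := zero_le_one.trans hx
    have hy0 : 0 ≤ y := zero_le_one.trans hy
    have hmixed : 0 ≤ x ^ 3 * y + x ^ 2 * y ^ 2 + x * y ^ 3 := by positivity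
    linarith [one_le_pow₀ (n := 4) hx, one_le_pow₀ (n := 4) hy]
  have hfactor : (y ^ 5 - y) - (x ^ 5 - x) =
      (y - x) * (x ^ 4 + x ^ 3 * y + x ^ 2 * y ^ 2 + x * y ^ 3 + y ^ 4 - 1) := by ring
  show x ^ 5 - x < y ^ 5 - y
  linarith [mul_pos (sub_pos.mpr hxy) (sub_pos.mpr hG)]

theorem radial_comparison_general (ρs : ℝ) (u₁ u₂ f : ℝ → ℝ)
    (hu₁ : ContDiffOn ℝ 2 u₁ (Set.Ici ρs)) (hu₂ : ContDiffOn ℝ 2 u₂ (Set.Ici ρs))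
    (hu₁1 : ∀ ρ, ρs ≤ ρ → 1 ≤ u₁ ρ)
    (hode₁ : ∀ ρ, ρs < ρ →
      deriv (deriv u₁) ρ + 2 * (Real.cosh ρ / Real.sinh ρ) * deriv u₁ ρ +
        (3 / 4) * u₁ ρ * (1 - (u₁ ρ) ^ 4) = f ρ)
    (hode₂ : ∀ ρ, ρs < ρ →
      deriv (deriv u₂) ρ + 2 * (Real.cosh ρ / Real.sinh ρ) * deriv u₂ ρ +
        (3 / 4) * u₂ ρ * (1 - (u₂ ρ) ^ 4) = f ρ)
    (hbd : u₂ ρs ≤ u₁ ρs)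
    (hlim : Filter.Tendsto (fun ρ => u₁ ρ - u₂ ρ) Filter.atTop (nhds 0)) :
    ∀ ρ, ρs ≤ ρ → u₂ ρ ≤ u₁ ρ := by
  intro ρ hρ
  by_contra! hneg
  obtain ⟨m, hm, hmρ, hmin⟩ := exists_isLocalMin_le_of_tendsto_zero (η := u₁ - u₂)
    (hu₁.continuousOn.sub hu₂.continuousOn) (sub_nonneg.mpr hbd) hρ (sub_neg.mpr hneg) hlim
  have hc₁ : ContDiffAt ℝ 2 u₁ m := hu₁.contDiffAt (Ici_mem_nhds hm)
  have hc₂ : ContDiffAt ℝ 2 u₂ m := hu₂.contDiffAt (Ici_mem_nhds hm)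
  have hderiv : deriv u₁ m = deriv u₂ m := by
    have hzero := hmin.deriv_eq_zero
    rw [deriv_sub (hc₁.differentiableAt two_ne_zero) (hc₂.differentiableAt two_ne_zero)] at hzero
    exact sub_eq_zero.mp hzero
  have hsecond : 0 ≤ deriv (deriv u₁) m - deriv (deriv u₂) m :=
    deriv_deriv_sub hc₁ hc₂ ▸ hmin.deriv_deriv_nonneg (hc₁.continuousAt.sub hc₂.continuousAt)
  have hu₁m : 1 ≤ u₁ m := hu₁1 m hm.le
  have hlt : u₁ m < u₂ m := sub_neg.mp (hmρ.trans_lt (sub_neg.mpr hneg))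
  have hmono : u₁ m ^ 5 - u₁ m < u₂ m ^ 5 - u₂ m :=
    strictMonoOn_pow_five_sub_self hu₁m (hu₁m.trans hlt.le) hlt
  have hode := hode₁ m hm
  rw [hderiv] at hode
  linarith [hode₂ m hm]

/-- Comparison principle for radial solutions of `u'' + 2 coth(ρ) u' + (3/4) u (1 - u^4) = f`. -/
theorem radial_comparison (ρs : ℝ) (hρs : 0 < ρs) (u₁ u₂ f : ℝ → ℝ)
    (hu₁ : ContDiffOn ℝ 2 u₁ (Set.Ici ρs)) (hu₂ : ContDiffOn ℝ 2 u₂ (Set.Ici ρs))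
    (hu₁1 : ∀ ρ, ρs ≤ ρ → 1 ≤ u₁ ρ) (hu₂1 : ∀ ρ, ρs ≤ ρ → 1 ≤ u₂ ρ)
    (hode₁ : ∀ ρ, ρs < ρ →
      deriv (deriv u₁) ρ + 2 * (Real.cosh ρ / Real.sinh ρ) * deriv u₁ ρ +
        (3 / 4) * u₁ ρ * (1 - (u₁ ρ) ^ 4) = f ρ)
    (hode₂ : ∀ ρ, ρs < ρ →
      deriv (deriv u₂) ρ + 2 * (Real.cosh ρ / Real.sinh ρ) * deriv u₂ ρ +
        (3 / 4) * u₂ ρ * (1 - (u₂ ρ) ^ 4) = f ρ)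
    (hbd : u₂ ρs ≤ u₁ ρs)
    (hlim : Filter.Tendsto (fun ρ => u₁ ρ - u₂ ρ) Filter.atTop (nhds 0)) :
    ∀ ρ, ρs ≤ ρ → u₂ ρ ≤ u₁ ρ :=
  radial_comparison_general ρs u₁ u₂ f hu₁ hu₂ hu₁1 hode₁ hode₂ hbd hlim
end

section
/- If a C^2 radial function φ : (ρ_0, ∞) → ℝ satisfies φ > 1, (sinh^2 ρ · φ')' = (3/4) sinh^2 ρ · φ(φ^4 - 1), and φ(ρ) → 1 as ρ → ∞, then φ'(ρ) < 0 for all ρ > ρ_0. -/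
/-- If a `C²` radial function `φ : (ρ₀, ∞) → ℝ` satisfies `φ > 1`,
`(sinh²ρ · φ')' = (3/4) sinh²ρ · φ(φ⁴ - 1)`, and `φ(ρ) → 1` as `ρ → ∞`,
then `φ'(ρ) < 0` for all `ρ > ρ₀`. -/
theorem phi_deriv_neg (ρ₀ : ℝ) (hρ₀ : 0 ≤ ρ₀) (φ : ℝ → ℝ)
    (hφ : ContDiffOn ℝ 2 φ (Set.Ioi ρ₀))
    (hφ1 : ∀ ρ, ρ₀ < ρ → 1 < φ ρ)
    (hode : ∀ ρ, ρ₀ < ρ →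
      deriv (fun s => (Real.sinh s) ^ 2 * deriv φ s) ρ =
        (3 / 4) * (Real.sinh ρ) ^ 2 * φ ρ * ((φ ρ) ^ 4 - 1))
    (hlim : Filter.Tendsto φ Filter.atTop (nhds 1)) :
    ∀ ρ, ρ₀ < ρ → deriv φ ρ < 0 := by
  set w : ℝ → ℝ := fun s => (Real.sinh s) ^ 2 * deriv φ s with hw
  have hsinh : ∀ ρ, ρ₀ < ρ → 0 < Real.sinh ρ := fun ρ hρ =>
    Real.sinh_pos_iff.mpr (lt_of_le_of_lt hρ₀ hρ)
  -- w is strictly increasing on (ρ₀, ∞)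
  have hwmono : StrictMonoOn w (Set.Ioi ρ₀) := by
    apply strictMonoOn_of_deriv_pos (convex_Ioi ρ₀)
    · exact (Real.continuous_sinh.pow 2).continuousOn.mul
        (hφ.continuousOn_deriv_of_isOpen isOpen_Ioi (by norm_num))
    · rw [interior_Ioi]
      intro x hx
      rw [hode x hx]
      have h1 : 1 < φ x := hφ1 x hx
      have h4 : 1 < (φ x) ^ 4 := one_lt_pow₀ h1 (by norm_num)
      have hs := hsinh x hx
      have : (0:ℝ) < (3/4) * (Real.sinh x) ^ 2 :=
        mul_pos (by norm_num) (pow_pos hs 2)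
      exact mul_pos (mul_pos this (by linarith)) (by linarith)
  -- w < 0 on (ρ₀, ∞)
  have hwneg : ∀ ρ, ρ₀ < ρ → w ρ < 0 := by
    by_contra h
    push_neg at h
    obtain ⟨ρ₁, hρ₁, hw1⟩ := h
    set ρ₂ := ρ₁ + 1 with hρ₂def
    have hρ₂ : ρ₀ < ρ₂ := by linarith
    have hw2 : 0 < w ρ₂ := lt_of_le_of_lt hw1
      (hwmono hρ₁ hρ₂ (by linarith))
    -- φ is strictly monotone on [ρ₂, ∞)
    have hφmono : StrictMonoOn φ (Set.Ici ρ₂) := by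
      apply strictMonoOn_of_deriv_pos (convex_Ici ρ₂)
      · exact hφ.continuousOn.mono (fun x hx => lt_of_lt_of_le hρ₂ hx)
      · rw [interior_Ici]
        intro x hx
        have hx0 : ρ₀ < x := lt_trans hρ₂ hx
        have hwx : 0 < (Real.sinh x) ^ 2 * deriv φ x := lt_trans hw2 (hwmono hρ₂ hx0 hx)
        have hsx : 0 < (Real.sinh x) ^ 2 := pow_pos (hsinh x hx0) 2
        nlinarith
    -- but φ → 1 and φ > 1: contradiction
    have hle : φ (ρ₂ + 1) ≤ 1 := by
      apply ge_of_tendsto hlim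
      filter_upwards [Filter.eventually_ge_atTop (ρ₂ + 1)] with s hs
      rcases eq_or_lt_of_le hs with h | h
      · exact le_of_eq (congrArg φ h)
      · exact (hφmono (Set.mem_Ici.mpr (by linarith)) (Set.mem_Ici.mpr (by linarith)) h).le
    exact absurd hle (not_le.mpr (hφ1 _ (by linarith)))
  intro ρ hρ
  have h1 : (Real.sinh ρ) ^ 2 * deriv φ ρ < 0 := hwneg ρ hρ
  have hsx : 0 < (Real.sinh ρ) ^ 2 := pow_pos (hsinh ρ hρ) 2
  nlinarith
end

section
/- With ξ as in the cubic interpolation (A < 0, B > 0, a > 0), one has ξ'(τ_2) - ξ'(ρ) ≥ a(τ_2 - ρ) · B(τ_2 - τ_1)^2 / (B(τ_2 - τ_1) - 2A) ≥ 0 for all ρ ∈ [τ_1, τ_2], with strict inequality ξ'(ρ) < ξ'(τ_2) when ρ < τ_2. -/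
/-!
Write `s = τ₂ - τ₁`. For `ξ(ρ) = (ρ - τ₁)²(aρ + b)` the derivative is `ξ'(ρ) = 3a(ρ - τ₁)² + 2c(ρ - τ₁)`
with `c = aτ₁ + b`, a quadratic vanishing at `τ₁`, so that
`ξ'(τ₂) - ξ'(ρ) = (τ₂ - ρ)/s · ξ'(τ₂) + 3a(τ₂ - ρ)(ρ - τ₁)`.
For the interpolation coefficients `ξ'(τ₂) = B` and `a = (Bs - 2A)/s³ > 0`, so the first term is
`a(τ₂ - ρ) · Bs²/(Bs - 2A)` and the second is nonnegative on `[τ₁, τ₂]`.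
-/

section SqMulLinear

variable (τ₁ a b : ℝ)

theorem hasDerivAt_sq_mul_linear (x : ℝ) :
    HasDerivAt (fun ρ => (ρ - τ₁) ^ 2 * (a * ρ + b))
      ((x - τ₁) * (3 * a * (x - τ₁) + 2 * (a * τ₁ + b))) x := by
  have h := (((hasDerivAt_id' x).sub_const τ₁).fun_pow 2).fun_mul
    (((hasDerivAt_id' x).const_mul a).add_const b)
  refine h.congr_deriv ?_
  norm_num
  ring

theorem deriv_sq_mul_linear_sub {τ₂ : ℝ} (h : τ₁ ≠ τ₂) (ρ : ℝ) :
    deriv (fun ρ => (ρ - τ₁) ^ 2 * (a * ρ + b)) τ₂ - deriv (fun ρ => (ρ - τ₁) ^ 2 * (a * ρ + b)) ρ =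
      (τ₂ - ρ) / (τ₂ - τ₁) * deriv (fun ρ => (ρ - τ₁) ^ 2 * (a * ρ + b)) τ₂ +
        3 * a * (τ₂ - ρ) * (ρ - τ₁) := by
  have hs : τ₂ - τ₁ ≠ 0 := sub_ne_zero.2 h.symm
  simp only [(hasDerivAt_sq_mul_linear τ₁ a b _).deriv]
  field_simp
  ring

end SqMulLinear

section CubicInterpolation

variable {τ₁ τ₂ : ℝ} (A B : ℝ)

theorem cubicInterp_coeff_eq (h : τ₁ ≠ τ₂) :
    (τ₂ - τ₁) ^ (-2 : ℤ) * (B - 2 * A * (τ₂ - τ₁)⁻¹) = (B * (τ₂ - τ₁) - 2 * A) / (τ₂ - τ₁) ^ 3 := by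
  have hs : τ₂ - τ₁ ≠ 0 := sub_ne_zero.2 h.symm
  rw [zpow_neg, zpow_ofNat]
  field_simp

theorem deriv_cubicInterp_right (h : τ₁ ≠ τ₂) :
    deriv (fun ρ => (ρ - τ₁) ^ 2 * ((τ₂ - τ₁) ^ (-2 : ℤ) * (B - 2 * A * (τ₂ - τ₁)⁻¹) * ρ +
      (τ₂ - τ₁) ^ (-2 : ℤ) * (A - τ₂ * B + 2 * A * τ₂ * (τ₂ - τ₁)⁻¹))) τ₂ = B := by
  have hs : τ₂ - τ₁ ≠ 0 := sub_ne_zero.2 h.symm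
  rw [(hasDerivAt_sq_mul_linear _ _ _ τ₂).deriv, zpow_neg, zpow_ofNat]
  field_simp
  ring

variable {A B}

theorem cubicInterp_coeff_pos (h : τ₁ < τ₂) (hD : 0 < B * (τ₂ - τ₁) - 2 * A) :
    0 < (τ₂ - τ₁) ^ (-2 : ℤ) * (B - 2 * A * (τ₂ - τ₁)⁻¹) := by
  have hs : 0 < τ₂ - τ₁ := sub_pos.2 h
  rw [cubicInterp_coeff_eq A B h.ne]
  positivity

theorem cubicInterp_coeff_mul_eq (h : τ₁ ≠ τ₂) (hD : B * (τ₂ - τ₁) - 2 * A ≠ 0) :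
    (τ₂ - τ₁) ^ (-2 : ℤ) * (B - 2 * A * (τ₂ - τ₁)⁻¹) *
        (B * (τ₂ - τ₁) ^ 2 / (B * (τ₂ - τ₁) - 2 * A)) = B / (τ₂ - τ₁) := by
  have hs : τ₂ - τ₁ ≠ 0 := sub_ne_zero.2 h.symm
  rw [cubicInterp_coeff_eq A B h]
  field_simp

end CubicInterpolation

/-- With `ξ` as in the cubic interpolation (`A < 0`, `B > 0`, `a > 0`), one has
`ξ'(τ₂) - ξ'(ρ) ≥ a(τ₂ - ρ)·B(τ₂ - τ₁)²/(B(τ₂ - τ₁) - 2A) ≥ 0` for all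
`ρ ∈ [τ₁, τ₂]`, with strict inequality `ξ'(ρ) < ξ'(τ₂)` when `ρ < τ₂`. -/
theorem cubic_deriv_estimate (τ₁ τ₂ A B : ℝ) (h12 : τ₁ < τ₂) (hA : A < 0) (hB : 0 < B) :
    let a := (τ₂ - τ₁) ^ (-2 : ℤ) * (B - 2 * A * (τ₂ - τ₁)⁻¹)
    let b := (τ₂ - τ₁) ^ (-2 : ℤ) * (A - τ₂ * B + 2 * A * τ₂ * (τ₂ - τ₁)⁻¹)
    let ξ := fun ρ : ℝ => (ρ - τ₁) ^ 2 * (a * ρ + b)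
    ∀ ρ ∈ Set.Icc τ₁ τ₂,
      (deriv ξ τ₂ - deriv ξ ρ ≥
        a * (τ₂ - ρ) * (B * (τ₂ - τ₁) ^ 2 / (B * (τ₂ - τ₁) - 2 * A)) ∧
       a * (τ₂ - ρ) * (B * (τ₂ - τ₁) ^ 2 / (B * (τ₂ - τ₁) - 2 * A)) ≥ 0) ∧
      (ρ < τ₂ → deriv ξ ρ < deriv ξ τ₂) := by
  intro a b ξ ρ ⟨hρ₁, hρ₂⟩
  have hs : 0 < τ₂ - τ₁ := sub_pos.2 h12
  have hD : 0 < B * (τ₂ - τ₁) - 2 * A := by nlinarith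
  have ha : 0 < a := cubicInterp_coeff_pos h12 hD
  have hξ' : deriv ξ τ₂ = B := deriv_cubicInterp_right A B h12.ne
  have hdiff : deriv ξ τ₂ - deriv ξ ρ = (τ₂ - ρ) / (τ₂ - τ₁) * B + 3 * a * (τ₂ - ρ) * (ρ - τ₁) := by
    rw [← hξ']
    exact deriv_sq_mul_linear_sub τ₁ a b h12.ne ρ
  have hlead : a * (τ₂ - ρ) * (B * (τ₂ - τ₁) ^ 2 / (B * (τ₂ - τ₁) - 2 * A)) =
      (τ₂ - ρ) / (τ₂ - τ₁) * B := by
    rw [mul_right_comm, cubicInterp_coeff_mul_eq h12.ne hD.ne']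
    ring
  have hrest : 0 ≤ 3 * a * (τ₂ - ρ) * (ρ - τ₁) := by
    have := sub_nonneg.2 hρ₁; have := sub_nonneg.2 hρ₂; positivity
  rw [hlead]
  refine ⟨⟨by linarith, mul_nonneg (div_nonneg (sub_nonneg.2 hρ₂) hs.le) hB.le⟩, fun hρ => ?_⟩
  have : 0 < (τ₂ - ρ) / (τ₂ - τ₁) * B := by have := sub_pos.2 hρ; positivity
  linarith
end
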